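/- arXiv:2007.00027 — 5 statements merged into one kernel-verified Lean document; each statement's English description precedes it below -/
import Mathlib

section
/- Let P be a polynomial in two variables with real coefficients satisfying the reduced graviton factorization constraint. Then P(E,0) = P(0,0) for all E ∈ ℝ. -/
/-- Evaluation of a two-variable real polynomial at `(x, y)`. -/
noncomputable def ev (P : MvPolynomial (Fin 2) ℝ) (x y : ℝ) : ℝ :=
  MvPolynomial.eval ![x, y] P

/-- The reduced graviton factorization constraint for a two-variable polynomial `P`. -/
def GravitonConstraint (P : MvPolynomial (Fin 2) ℝ) : Prop :=
  ∀ E1 E2 E3 E4 : ℝ, E1 + E2 + E3 + E4 = 0 →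
    (ev P (E1 + E3) (E1 * E3) * ev P (E2 + E4) (E2 * E4) =
      ev P (-E2) (-E1 * (E1 + E2)) * ev P (-E3) (-E4 * (E3 + E4))) ∧
    (ev P (-E2) (-E1 * (E1 + E2)) * ev P (-E3) (-E4 * (E3 + E4)) =
      ev P (-E4) (-E1 * (E1 + E4)) * ev P (-E3) (-E2 * (E2 + E3)))

/-!
Write `f E = P(E, 0)`, `g t = P(0, -t²)` and `c = P(0, 0)`. Specialising the constraint to
`(0, t, 0, -t)` gives `c g(t) = f(-t) g(t) = f(t) g(t)`, so `(f - c) g = 0` as polynomials in `t`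
and `f = c` unless `g = 0`. In that case `c = g(0) = 0`, and the specialisation to
`(t, -t, 0, 0)`, namely `f(t) f(-t) = c f(t)`, forces `f = 0` as well.
-/

open Polynomial

theorem Polynomial.eq_zero_or_eq_zero_of_forall_eval_mul_eval_eq_zero {R : Type*} [CommRing R]
    [IsDomain R] [Infinite R] {p q : R[X]} (h : ∀ x, p.eval x * q.eval x = 0) :
    p = 0 ∨ q = 0 :=
  mul_eq_zero.mp <| Polynomial.funext fun x => by simpa using h x

lemma eval_aeval_eq_ev (P : MvPolynomial (Fin 2) ℝ) (u v : ℝ[X]) (x : ℝ) :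
    (MvPolynomial.aeval ![u, v] P).eval x = ev P (u.eval x) (v.eval x) := by
  induction P using MvPolynomial.induction_on with
  | C a => simp [ev]
  | add p q hp hq => simp_all [ev]
  | mul_X p i hp => fin_cases i <;> simp_all [ev]

namespace GravitonConstraint

variable {P : MvPolynomial (Fin 2) ℝ} (h : GravitonConstraint P)
include h

lemma ev_mul_ev_neg (E : ℝ) : ev P E 0 * ev P (-E) 0 = ev P E 0 * ev P 0 0 := by
  simpa using (h E (-E) 0 0 (by ring)).1

lemma sub_mul_ev_eq_zero (t : ℝ) : (ev P t 0 - ev P 0 0) * ev P 0 (-t ^ 2) = 0 := by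
  obtain ⟨h₁, h₂⟩ := h 0 t 0 (-t) (by ring)
  simp only [neg_zero, add_zero, zero_add, zero_mul, mul_zero, neg_neg, neg_mul, mul_neg,
    add_neg_cancel] at h₁ h₂
  rw [sub_mul, sq]
  linarith

lemma ev_eq_zero_of_forall_ev_neg_sq_eq_zero (hg : ∀ t, ev P 0 (-t ^ 2) = 0) (E : ℝ) :
    ev P E 0 = 0 := by
  have hc : ev P 0 0 = 0 := by simpa using hg 0
  set F : ℝ[X] := MvPolynomial.aeval ![X, 0] P
  have hF : ∀ x, F.eval x = ev P x 0 := by simp [F, eval_aeval_eq_ev]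
  have hFF : ∀ x, F.eval x * (F.comp (-X)).eval x = 0 := fun x => by
    simpa [hF, hc] using h.ev_mul_ev_neg x
  rcases eq_zero_or_eq_zero_of_forall_eval_mul_eval_eq_zero hFF with hF0 | hF0
  · simpa [hF] using congrArg (eval E) hF0
  · simpa [hF] using congrArg (eval (-E)) hF0

end GravitonConstraint

theorem stmt_1 (P : MvPolynomial (Fin 2) ℝ) (h : GravitonConstraint P) :
    ∀ E : ℝ, ev P E 0 = ev P 0 0 := by
  set F : ℝ[X] := MvPolynomial.aeval ![X, 0] P
  set G : ℝ[X] := MvPolynomial.aeval ![0, -X ^ 2] P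
  have hF : ∀ x, F.eval x = ev P x 0 := by simp [F, eval_aeval_eq_ev]
  have hG : ∀ t, G.eval t = ev P 0 (-t ^ 2) := by simp [G, eval_aeval_eq_ev]
  have hFG : ∀ t, (F - C (ev P 0 0)).eval t * G.eval t = 0 := fun t => by
    simpa [hF, hG] using h.sub_mul_ev_eq_zero t
  intro E
  rcases eq_zero_or_eq_zero_of_forall_eval_mul_eval_eq_zero hFG with hFc | hG0
  · simpa [hF, sub_eq_zero] using congrArg (eval E) hFc
  · have hg : ∀ t, ev P 0 (-t ^ 2) = 0 := fun t => by rw [← hG, hG0, eval_zero]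
    rw [h.ev_eq_zero_of_forall_ev_neg_sq_eq_zero hg, h.ev_eq_zero_of_forall_ev_neg_sq_eq_zero hg]
end

section
/- Let P be a polynomial in two variables with real coefficients satisfying the reduced graviton factorization constraint. Then P(x,y)·P(−x,y) = P(0,0)² for all x,y ∈ ℝ. -/
lemma ev_cont (P : MvPolynomial (Fin 2) ℝ) : Continuous fun a : ℝ => ev P a 0 := by
  apply (MvPolynomial.continuous_eval P).comp
  refine continuous_pi fun i => ?_
  fin_cases i
  · exact continuous_id
  · exact continuous_const

lemma L1 (P : MvPolynomial (Fin 2) ℝ) (h : GravitonConstraint P) (a b : ℝ) :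
    ev P (a + b) (a * b) * ev P (-(a + b)) (a * b) = ev P a 0 * ev P (-b) 0 := by
  have h1 := (h a (-a) b (-b) (by ring)).1
  have e1 : -a + -b = -(a + b) := by ring
  have e2 : -a * -b = a * b := by ring
  have e3 : -(-a) = a := by ring
  have e4 : -a * (a + -a) = 0 := by ring
  have e5 : -(-b) * (b + -b) = 0 := by ring
  rw [e1, e2, e3, e4, e5] at h1
  exact h1

lemma key (P : MvPolynomial (Fin 2) ℝ) (h : GravitonConstraint P) (a b : ℝ) :
    ev P a 0 * ev P (-b) 0 = (ev P 0 0) ^ 2 := by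
  set f : ℝ → ℝ := fun t => ev P t 0 with hfdef
  set c : ℝ := ev P 0 0 with hc
  have hf0 : f 0 = c := rfl
  show f a * f (-b) = c ^ 2
  have hsym : ∀ u v : ℝ, f u * f (-v) = f v * f (-u) := by
    intro u v
    have h1 := L1 P h u v
    have h2 := L1 P h v u
    have e1 : v + u = u + v := by ring
    have e2 : v * u = u * v := by ring
    rw [e1, e2] at h2
    exact h1.symm.trans h2
  have hdiag : ∀ u : ℝ, f u * f (-u) = f u * c := by
    intro u
    have h1 := L1 P h u 0
    have e1 : u + 0 = u := by ring
    have e2 : u * 0 = 0 := by ring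
    rw [e1, e2, neg_zero] at h1
    exact h1
  by_cases hcz : c = 0
  · rw [hcz]
    rw [show (0:ℝ)^2 = 0 by norm_num]
    by_contra hne
    have ha : f a ≠ 0 := left_ne_zero_of_mul hne
    have hb : f (-b) ≠ 0 := right_ne_zero_of_mul hne
    have h1 : f (-a) = 0 := by
      have hd := hdiag a; rw [hcz, mul_zero] at hd
      exact (mul_eq_zero.mp hd).resolve_left ha
    have h2 : f b = 0 := by
      have hd := hdiag b; rw [hcz, mul_zero] at hd
      exact (mul_eq_zero.mp hd).resolve_right hb
    have hs := hsym a b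
    rw [h1, h2, zero_mul] at hs
    exact hne hs
  · have heven : ∀ u : ℝ, f (-u) = f u := by
      intro u
      have hs := hsym u 0
      rw [neg_zero, hf0] at hs
      have : c * f (-u) = c * f u := by linarith
      exact mul_left_cancel₀ hcz this
    have hvals : ∀ u : ℝ, f u = 0 ∨ f u = c := by
      intro u
      have hd := hdiag u
      rw [heven u] at hd
      have h0 : f u * (f u - c) = 0 := by rw [mul_sub, hd, sub_self]
      rcases mul_eq_zero.mp h0 with h0 | h0
      · exact Or.inl h0
      · exact Or.inr (by linarith)
    have hfc : ∀ u : ℝ, f u = c := by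
      intro u
      rcases hvals u with h0 | h0
      · exfalso
        have hcont : ContinuousOn f (Set.uIcc 0 u) := (ev_cont P).continuousOn
        have hmem : c / 2 ∈ Set.uIcc (f 0) (f u) := by
          rw [hf0, h0]
          rcases le_or_gt 0 c with hcs | hcs
          · exact Set.mem_uIcc.mpr (Or.inr ⟨by linarith, by linarith⟩)
          · exact Set.mem_uIcc.mpr (Or.inl ⟨by linarith, by linarith⟩)
        obtain ⟨t, _, ht⟩ := intermediate_value_uIcc hcont hmem
        rcases hvals t with h1 | h1 <;> rw [h1] at ht <;>
          exact hcz (by linarith)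
      · exact h0
    rw [hfc a, hfc (-b)]
    ring

lemma ev_poly (P : MvPolynomial (Fin 2) ℝ) (x y : ℝ) :
    Polynomial.eval y (MvPolynomial.eval₂ Polynomial.C ![Polynomial.C x, Polynomial.X] P)
      = ev P x y := by
  rw [MvPolynomial.polynomial_eval_eval₂]
  unfold ev
  rw [MvPolynomial.eval]
  congr 1
  · ext r
    simp
  · funext i
    fin_cases i <;> simp

lemma region (P : MvPolynomial (Fin 2) ℝ) (h : GravitonConstraint P) (x y : ℝ) (hy : y ≤ 0) :
    ev P x y * ev P (-x) y = (ev P 0 0) ^ 2 := by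
  have hdd : (0:ℝ) ≤ x ^ 2 - 4 * y := by nlinarith
  set d := Real.sqrt (x ^ 2 - 4 * y) with hd
  have hd2 : d ^ 2 = x ^ 2 - 4 * y := Real.sq_sqrt hdd
  have hL := L1 P h ((x + d) / 2) ((x - d) / 2)
  have e1 : (x + d) / 2 + (x - d) / 2 = x := by ring
  have e2 : (x + d) / 2 * ((x - d) / 2) = y := by nlinarith [hd2]
  rw [e1, e2] at hL
  rw [hL]
  exact key P h ((x + d) / 2) ((x - d) / 2)

theorem stmt_2 (P : MvPolynomial (Fin 2) ℝ) (h : GravitonConstraint P) :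
    ∀ x y : ℝ, ev P x y * ev P (-x) y = (ev P 0 0) ^ 2 := by
  intro x y
  set q : Polynomial ℝ :=
    MvPolynomial.eval₂ Polynomial.C ![Polynomial.C x, Polynomial.X] P *
      MvPolynomial.eval₂ Polynomial.C ![Polynomial.C (-x), Polynomial.X] P -
      Polynomial.C ((ev P 0 0) ^ 2) with hqdef
  have hq : ∀ z : ℝ, q.eval z = ev P x z * ev P (-x) z - (ev P 0 0) ^ 2 := by
    intro z
    rw [hqdef]
    simp only [Polynomial.eval_sub, Polynomial.eval_mul, Polynomial.eval_C, ev_poly]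
  have hq0 : q = 0 := by
    apply Polynomial.eq_zero_of_infinite_isRoot
    apply (Set.Iic_infinite (0:ℝ)).mono
    intro z hz
    show q.IsRoot z
    rw [Polynomial.IsRoot, hq z, region P h x z hz, sub_self]
  have h0 := hq y
  rw [hq0, Polynomial.eval_zero] at h0
  linarith
end

section
/- Let P be a polynomial in two variables with real coefficients satisfying the reduced graviton factorization constraint. Then P is a constant polynomial. -/
/-!
Specialising the constraint at `(x, -x, 0, 0)` gives `P(x,0) (P(-x,0) - P(0,0)) = 0`, so `P` is
constant, say `c`, on the first axis. At `(a, b, -b, -a)` it gives `P(-b,y) P(b,y) = c²` for every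
`y = -a(a+b)`, i.e. for all `y ≤ b²/4`, hence for all `y`. So `P(-x,y) P(x,y) = c²` in `ℝ[x,y]`:
for `c ≠ 0` this makes `P` a unit, hence constant, and for `c = 0` either `P` or its reflection
vanishes.
-/

open scoped Polynomial

lemma eval_aeval_eq_ev_s3 (P : MvPolynomial (Fin 2) ℝ) (p q : ℝ[X]) (t : ℝ) :
    (MvPolynomial.aeval ![p, q] P).eval t = ev P (p.eval t) (q.eval t) := by
  rw [MvPolynomial.aeval_def, MvPolynomial.polynomial_eval_eval₂, ev, MvPolynomial.eval]
  congr 1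
  · ext; simp
  · ext i; fin_cases i <;> rfl

lemma ev_mul (P Q : MvPolynomial (Fin 2) ℝ) (x y : ℝ) : ev (P * Q) x y = ev P x y * ev Q x y :=
  map_mul _ P Q

lemma eq_C_of_forall_ev_eq {P : MvPolynomial (Fin 2) ℝ} {c : ℝ} (h : ∀ x y, ev P x y = c) :
    P = MvPolynomial.C c :=
  MvPolynomial.funext fun v => by
    have hv : v = ![v 0, v 1] := by ext i; fin_cases i <;> rfl
    rw [MvPolynomial.eval_C, ← h (v 0) (v 1), ev, ← hv]

noncomputable def reflectFst (P : MvPolynomial (Fin 2) ℝ) : MvPolynomial (Fin 2) ℝ :=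
  MvPolynomial.aeval ![-MvPolynomial.X 0, MvPolynomial.X 1] P

lemma ev_reflectFst (P : MvPolynomial (Fin 2) ℝ) (x y : ℝ) :
    ev (reflectFst P) x y = ev P (-x) y := by
  rw [reflectFst, ev, ev, MvPolynomial.aeval_def, MvPolynomial.eval_eval₂, MvPolynomial.eval]
  congr 1
  · ext; simp
  · ext i; fin_cases i <;> simp

lemma Polynomial.eq_of_eqOn_Iic {p q : ℝ[X]} {m : ℝ} (h : Set.EqOn p.eval q.eval (Set.Iic m)) :
    p = q :=
  eq_of_infinite_eval_eq p q ((Set.Iic_infinite m).mono h)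

lemma MvPolynomial.exists_eq_C_or_eq_zero_of_mul_eq_C {σ K : Type*} [Field K]
    {P Q : MvPolynomial σ K} {k : K} (h : Q * P = C k) : (∃ r, P = C r) ∨ Q = 0 := by
  rcases eq_or_ne k 0 with rfl | hk
  · rcases mul_eq_zero.mp (h.trans C_0) with hQ | rfl
    · exact .inr hQ
    · exact .inl ⟨0, C_0.symm⟩
  · have : IsUnit P := isUnit_of_mul_isUnit_right (by rw [h]; exact hk.isUnit.map C)
    obtain ⟨r, -, hr⟩ := isUnit_iff_eq_C_of_isReduced.mp this
    exact .inl ⟨r, hr⟩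

lemma exists_neg_mul_add_eq {b y : ℝ} (hy : y ≤ b ^ 2 / 4) : ∃ a : ℝ, -(a * (a + b)) = y := by
  refine ⟨√(b ^ 2 / 4 - y) - b / 2, ?_⟩
  have := Real.sq_sqrt (sub_nonneg.mpr hy)
  nlinarith

namespace GravitonConstraint

variable {P : MvPolynomial (Fin 2) ℝ} (h : GravitonConstraint P)
include h

lemma ev_mul_ev_neg_axis (x : ℝ) : ev P x 0 * ev P (-x) 0 = ev P x 0 * ev P 0 0 := by
  simpa using (h x (-x) 0 0 (by ring)).1

lemma ev_mul_ev_parabola (a b : ℝ) :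
    ev P (-b) (-(a * (a + b))) * ev P b (-(a * (a + b))) = ev P a 0 * ev P b 0 := by
  have := (h a b (-b) (-a) (by ring)).2
  ring_nf at this ⊢
  exact this

lemma ev_axis (x : ℝ) : ev P x 0 = ev P 0 0 := by
  have hprod : MvPolynomial.aeval ![Polynomial.X, 0] P *
      (MvPolynomial.aeval ![-Polynomial.X, 0] P - Polynomial.C (ev P 0 0)) = 0 :=
    Polynomial.funext fun r => by
      simp [eval_aeval_eq_ev_s3, mul_sub, h.ev_mul_ev_neg_axis r]
  rcases mul_eq_zero.mp hprod with hzero | hconst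
  · have hvanish (t : ℝ) : ev P t 0 = 0 := by
      simpa [eval_aeval_eq_ev_s3] using congrArg (Polynomial.eval t) hzero
    rw [hvanish, hvanish]
  · simpa [eval_aeval_eq_ev_s3, sub_eq_zero] using congrArg (Polynomial.eval (-x)) hconst

lemma ev_neg_mul_ev (x y : ℝ) : ev P (-x) y * ev P x y = ev P 0 0 ^ 2 := by
  have hsections : MvPolynomial.aeval ![Polynomial.C (-x), Polynomial.X] P *
      MvPolynomial.aeval ![Polynomial.C x, Polynomial.X] P = Polynomial.C (ev P 0 0 ^ 2) :=
    Polynomial.eq_of_eqOn_Iic (m := x ^ 2 / 4) fun y hy => by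
      obtain ⟨a, rfl⟩ := exists_neg_mul_add_eq hy
      simp [eval_aeval_eq_ev_s3, h.ev_mul_ev_parabola, h.ev_axis a, h.ev_axis x, sq]
  simpa [eval_aeval_eq_ev_s3] using congrArg (Polynomial.eval y) hsections

lemma reflectFst_mul_self : reflectFst P * P = MvPolynomial.C (ev P 0 0 ^ 2) :=
  eq_C_of_forall_ev_eq fun x y => by rw [ev_mul, ev_reflectFst, h.ev_neg_mul_ev]

end GravitonConstraint

theorem stmt_3 (P : MvPolynomial (Fin 2) ℝ) (h : GravitonConstraint P) :
    ∃ c : ℝ, P = MvPolynomial.C c := by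
  rcases MvPolynomial.exists_eq_C_or_eq_zero_of_mul_eq_C h.reflectFst_mul_self with hC | hzero
  · exact hC
  · refine ⟨0, eq_C_of_forall_ev_eq fun x y => ?_⟩
    rw [← neg_neg x, ← ev_reflectFst, hzero, ev, map_zero]
end

section
/- Let m, k be natural numbers and P ∈ ℝ[X,Y] a polynomial such that Y does not divide P if m > 0 and X does not divide P if k > 0. Define F(x,y) = P(x+y, xy)/(xᵐ yᵐ (x+y)ᵏ) for real x, y with x·y·(x+y) ≠ 0. Suppose that for all E₁,E₂,E₃,E₄ ∈ ℝ with E₁+E₂+E₃+E₄ = 0 such that each of the six argument pairs (−E₁−E₂, E₁), (E₄, −E₃−E₄), (E₁, E₃), (E₂, E₄), (E₄, −E₁−E₄), (−E₃−E₂, E₃) has both entries nonzero and nonzero sum of entries, one has F(−E₁−E₂, E₁)·F(E₄, −E₃−E₄) = F(E₁,E₃)·F(E₂,E₄) and F(E₁,E₃)·F(E₂,E₄) = F(E₄, −E₁−E₄)·F(−E₃−E₂, E₃). Then F is constant: there exists c ∈ ℝ such that F(x,y) = c whenever x·y·(x+y) ≠ 0. -/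
/-- An argument pair `(a, b)` is admissible if both entries and their sum are nonzero. -/
def OkPair (a b : ℝ) : Prop := a ≠ 0 ∧ b ≠ 0 ∧ a + b ≠ 0

/-!
Write `f(x, y) = P(x + y, xy)`, so that `F = f / (xᵐ yᵐ (x + y)ᵏ)`, and clear denominators in the
second identity at `(E₁, E₂, E₃, E₄) = (a, b, c, -(a + b + c))`. For fixed admissible `b, c` both
sides are continuous in `a` and agree for all but finitely many `a`, hence for every `a`.
If `k > 0`, then at `a = -c, b = c` the factor `(a + c)ᵏ` kills one side but not the other, which
survives because `X ∤ P` makes `f(-c, c) = P(0, -c²)` nonzero for large `c`. Likewise, at `a = 0`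
the factor `aᵐ` then forces `m = 0`, now using `Y ∤ P`. Once `m = k = 0`, the identity
`f(a, c) f(b, d) = f(d, b + c) f(-(b + c), c)` equates a polynomial of degree `2n` in `a` with one
of degree `n`, where `n` is the degree of `f` in one variable; so `f` depends on one variable only
and, being symmetric, is constant.
-/

open Polynomial Filter
open scoped Polynomial.Bivariate

theorem Polynomial.eventually_cofinite_eval_ne_zero {R : Type*} [CommRing R] [IsDomain R]
    {p : R[X]} (hp : p ≠ 0) : ∀ᶠ x in cofinite, p.eval x ≠ 0 :=
  eventually_cofinite.2 (by simpa using finite_setOfPred_isRoot hp)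

theorem Polynomial.eventually_cofinite_eventually_cofinite_evalEval_ne_zero {R : Type*}
    [CommRing R] [IsDomain R] {f : R[X][Y]} (hf : f ≠ 0) :
    ∀ᶠ x in cofinite, ∀ᶠ y in cofinite, f.evalEval x y ≠ 0 := by
  filter_upwards [eventually_cofinite_eval_ne_zero (leadingCoeff_ne_zero.2 hf)] with x hx
  have hfx : f.map (evalRingHom x) ≠ 0 :=
    leadingCoeff_ne_zero.1 (by rwa [leadingCoeff_map_of_leadingCoeff_ne_zero _ hx])
  filter_upwards [eventually_cofinite_eval_ne_zero hfx] with y hy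
  rwa [map_evalRingHom_eval] at hy

theorem Polynomial.evalEval_eq_of_natDegree_eq_zero {R : Type*} [Semiring R] {f : R[X][Y]}
    (hsymm : ∀ x y, f.evalEval x y = f.evalEval y x) (h : f.natDegree = 0) (x y : R) :
    f.evalEval x y = f.evalEval 0 0 := by
  rw [eq_C_of_natDegree_eq_zero h] at hsymm ⊢
  simp only [evalEval_C] at hsymm ⊢
  exact hsymm x 0

theorem Continuous.eq_of_eventuallyEq_cofinite {β : Type*} [TopologicalSpace β] [T2Space β]
    {f g : ℝ → β} (hf : Continuous f) (hg : Continuous g) (h : f =ᶠ[cofinite] g) : f = g :=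
  hf.ext_on ((eventually_cofinite.1 h).countable.dense_compl ℝ) hg fun _ hx => not_not.1 hx

theorem Polynomial.Bivariate.eval_equivMvPolynomial {R : Type*} [CommSemiring R] (p : R[X][Y])
    (v : Fin 2 → R) : MvPolynomial.eval v (equivMvPolynomial R p) = p.evalEval (v 0) (v 1) := by
  induction p using Polynomial.induction_on' with
  | add p q hp hq => simp_all
  | monomial n a =>
    induction a using Polynomial.induction_on' with
    | add p q hp hq => simp_all
    | monomial i r => simp [equivMvPolynomial, evalEval]

theorem Polynomial.continuous_uncurry_evalEval {R : Type*} [CommSemiring R] [TopologicalSpace R]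
    [IsTopologicalSemiring R] (p : R[X][Y]) : Continuous (Function.uncurry fun x y => p.evalEval x y) := by
  have hp : (Function.uncurry fun x y => p.evalEval x y) =
      fun z : R × R => MvPolynomial.eval ![z.1, z.2] (Bivariate.equivMvPolynomial R p) := by
    ext z
    rw [Bivariate.eval_equivMvPolynomial]
    rfl
  rw [hp]
  refine (MvPolynomial.continuous_eval _).comp (continuous_pi fun i => ?_)
  fin_cases i
  · exact continuous_fst
  · exact continuous_snd

theorem MvPolynomial.eventually_cofinite_eval_ne_zero_of_not_X_one_dvd {R : Type*} [CommRing R]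
    [IsDomain R] {P : MvPolynomial (Fin 2) R} (h : ¬ X 1 ∣ P) :
    ∀ᶠ s in cofinite, eval ![s, 0] P ≠ 0 := by
  set p := (Bivariate.equivMvPolynomial R).symm P
  have hp : p.coeff 0 ≠ 0 := by
    rwa [Ne, ← Polynomial.X_dvd_iff, ← map_dvd_iff (Bivariate.equivMvPolynomial R),
      Bivariate.equivMvPolynomial_X, AlgEquiv.apply_symm_apply]
  filter_upwards [Polynomial.eventually_cofinite_eval_ne_zero hp] with s hs
  rw [← AlgEquiv.apply_symm_apply (Bivariate.equivMvPolynomial R) P,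
    Bivariate.eval_equivMvPolynomial]
  simpa [evalEval, coeff_zero_eq_eval_zero] using hs

theorem MvPolynomial.eventually_cofinite_eval_ne_zero_of_not_X_zero_dvd {R : Type*} [CommRing R]
    [IsDomain R] {P : MvPolynomial (Fin 2) R} (h : ¬ X 0 ∣ P) :
    ∀ᶠ t in cofinite, eval ![0, t] P ≠ 0 := by
  have hswap : ¬ X 1 ∣ rename (Equiv.swap 0 1) P := fun h1 => h <| by
    simpa [rename_rename, ← Equiv.coe_trans, Equiv.swap_swap] using
      map_dvd (rename (Equiv.swap 0 1)) h1
  filter_upwards [eventually_cofinite_eval_ne_zero_of_not_X_one_dvd hswap] with t ht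
  rwa [eval_rename, show ![t, 0] ∘ Equiv.swap 0 1 = ![0, t] by ext i; fin_cases i <;> rfl] at ht

namespace SymmetricFraction

variable {R : Type*} [CommSemiring R]

noncomputable def symmPoly (P : MvPolynomial (Fin 2) R) : R[X][Y] :=
  MvPolynomial.aeval ![C X + Y, C X * Y] P

theorem evalEval_symmPoly (P : MvPolynomial (Fin 2) R) (x y : R) :
    (symmPoly P).evalEval x y = MvPolynomial.eval ![x + y, x * y] P := by
  rw [← coe_aevalAeval_eq_evalEval (A := R), symmPoly, ← AlgHom.comp_apply,
    MvPolynomial.comp_aeval, MvPolynomial.aeval_eq_eval]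
  congr 2
  funext i
  fin_cases i <;> simp [mul_comm y x]

theorem evalEval_symmPoly_comm (P : MvPolynomial (Fin 2) R) (x y : R) :
    (symmPoly P).evalEval x y = (symmPoly P).evalEval y x := by
  rw [evalEval_symmPoly, evalEval_symmPoly, add_comm, mul_comm]

def denom (m k : ℕ) (x y : ℝ) : ℝ := x ^ m * y ^ m * (x + y) ^ k

theorem denom_ne_zero {m k : ℕ} {x y : ℝ} (h : x * y * (x + y) ≠ 0) : denom m k x y ≠ 0 := by
  simp only [mul_ne_zero_iff] at h
  exact mul_ne_zero (mul_ne_zero (pow_ne_zero _ h.1.1) (pow_ne_zero _ h.1.2)) (pow_ne_zero _ h.2)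

/-- The second identity at `(E₁, E₂, E₃, E₄) = (a, b, c, -(a + b + c))`,
`F(a, c) F(b, d) = F(d, b + c) F(-(b + c), c)`, for `F = φ / denom m k` with denominators
cleared. -/
def CrossRel (φ : ℝ → ℝ → ℝ) (m k : ℕ) : Prop :=
  ∀ b c : ℝ, b ≠ 0 → c ≠ 0 → b + c ≠ 0 → ∀ a,
    φ a c * φ b (-(a + b + c)) * (denom m k (-(a + b + c)) (b + c) * denom m k (-(b + c)) c) =
      φ (-(a + b + c)) (b + c) * φ (-(b + c)) c * (denom m k a c * denom m k b (-(a + b + c)))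

theorem CrossRel.of_eventually {φ F : ℝ → ℝ → ℝ} {m k : ℕ} (hφ : Continuous (Function.uncurry φ))
    (hF : ∀ x y, x * y * (x + y) ≠ 0 → F x y = φ x y / denom m k x y)
    (h : ∀ b c : ℝ, b ≠ 0 → c ≠ 0 → b + c ≠ 0 → ∀ᶠ a in cofinite,
      F a c * F b (-(a + b + c)) = F (-(a + b + c)) (b + c) * F (-(b + c)) c) :
    CrossRel φ m k := by
  have hφF : ∀ x y, x ≠ 0 → y ≠ 0 → x + y ≠ 0 → φ x y = F x y * denom m k x y :=
    fun x y hx hy hxy => by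
      have hxy' : x * y * (x + y) ≠ 0 := mul_ne_zero (mul_ne_zero hx hy) hxy
      rw [hF x y hxy', div_mul_cancel₀ _ (denom_ne_zero hxy')]
  intro b c hb hc hbc
  refine congrFun (Continuous.eq_of_eventuallyEq_cofinite ?_ ?_ ?_)
  · unfold denom; fun_prop
  · unfold denom; fun_prop
  filter_upwards [h b c hb hc hbc, eventually_cofinite_ne 0, eventually_cofinite_ne (-b),
    eventually_cofinite_ne (-c), eventually_cofinite_ne (-(b + c))] with a hrel h0 h1 h2 h3
  rw [hφF a c h0 hc (by grind), hφF b _ hb (by grind) (by grind),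
    hφF _ (b + c) (by grind) hbc (by grind), hφF (-(b + c)) c (by grind) hc (by grind)]
  linear_combination denom m k a c * denom m k b (-(a + b + c)) *
    denom m k (-(a + b + c)) (b + c) * denom m k (-(b + c)) c * hrel

theorem CrossRel.sum_exponent_eq_zero {φ : ℝ → ℝ → ℝ} {m k : ℕ} (h : CrossRel φ m k) {c : ℝ}
    (hc : c ≠ 0) (hφ : φ (-c) c * φ c (-c) ≠ 0) : k = 0 := by
  by_contra hk
  have := h c c hc hc (by grind) (-c)
  simp [denom, zero_pow hk, hc] at this
  exact hφ (mul_eq_zero.2 this)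

theorem CrossRel.prod_exponent_eq_zero {φ : ℝ → ℝ → ℝ} {m : ℕ} (h : CrossRel φ m 0) {b c : ℝ}
    (hb : b ≠ 0) (hc : c ≠ 0) (hbc : b + c ≠ 0) (hφ : φ 0 c * φ b (-(b + c)) ≠ 0) : m = 0 := by
  by_contra hm
  have := h b c hb hc hbc 0
  have hbc' : -c + -b ≠ 0 := by grind
  simp [denom, zero_pow hm, hc, hbc, hbc'] at this
  exact hφ (mul_eq_zero.2 (by simpa [add_comm] using this))

theorem sum_exponent_eq_zero_of_not_X_zero_dvd {P : MvPolynomial (Fin 2) ℝ} {m k : ℕ}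
    (hX : 0 < k → ¬ MvPolynomial.X 0 ∣ P) (h : CrossRel (fun x y => (symmPoly P).evalEval x y) m k) :
    k = 0 := by
  by_contra hk
  have hP := MvPolynomial.eventually_cofinite_eval_ne_zero_of_not_X_zero_dvd
    (hX (Nat.pos_of_ne_zero hk))
  have hsq : Tendsto (fun c : ℝ => -c ^ 2) atTop cofinite :=
    (tendsto_neg_atTop_atBot.comp (tendsto_pow_atTop two_ne_zero)).mono_right atBot_le_cofinite
  obtain ⟨c, hc, hPc⟩ := ((eventually_gt_atTop 0).and (hsq.eventually hP)).exists
  refine hk (h.sum_exponent_eq_zero hc.ne' ?_)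
  rw [evalEval_symmPoly_comm P c, mul_self_ne_zero]
  simpa [evalEval_symmPoly, sq] using hPc

theorem prod_exponent_eq_zero_of_not_X_one_dvd {P : MvPolynomial (Fin 2) ℝ} {m : ℕ}
    (hY : 0 < m → ¬ MvPolynomial.X 1 ∣ P) (h : CrossRel (fun x y => (symmPoly P).evalEval x y) m 0) :
    m = 0 := by
  by_contra hm
  have hP := MvPolynomial.eventually_cofinite_eval_ne_zero_of_not_X_one_dvd
    (hY (Nat.pos_of_ne_zero hm))
  have hf : symmPoly P ≠ 0 := fun h0 => by
    obtain ⟨s, hs⟩ := hP.exists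
    exact hs (by simpa [h0] using (evalEval_symmPoly P s 0).symm)
  obtain ⟨b, hb, hbf⟩ := ((eventually_cofinite_ne 0).and
    (eventually_cofinite_eventually_cofinite_evalEval_ne_zero hf)).exists
  have hreflect : Tendsto (fun c : ℝ => -(b + c)) cofinite cofinite :=
    (neg_injective.comp (add_right_injective b)).tendsto_cofinite
  obtain ⟨c, hc, hbc, hPc, hfc⟩ := ((eventually_cofinite_ne 0).and
    ((eventually_cofinite_ne (-b)).and (hP.and (hreflect.eventually hbf)))).exists
  refine hm (h.prod_exponent_eq_zero hb hc (by grind) (mul_ne_zero ?_ hfc))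
  simpa [evalEval_symmPoly] using hPc

theorem CrossRel.natDegree_eq_zero_of_eval_ne_zero {f : ℝ[X][Y]}
    (hsymm : ∀ x y, f.evalEval x y = f.evalEval y x) (h : CrossRel (fun x y => f.evalEval x y) 0 0)
    {b c : ℝ} (hb : b ≠ 0) (hc : c ≠ 0) (hbc : b + c ≠ 0) (hℓc : f.leadingCoeff.eval c ≠ 0)
    (hℓb : f.leadingCoeff.eval b ≠ 0) (hℓbc : f.leadingCoeff.eval (b + c) ≠ 0)
    (hK : f.evalEval (-(b + c)) c ≠ 0) : f.natDegree = 0 := by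
  have hslice : ∀ r : ℝ, f.leadingCoeff.eval r ≠ 0 →
      ((f.map (evalRingHom r)).comp (-(X + C (b + c)))).natDegree = f.natDegree := fun r hr => by
    rw [natDegree_comp, natDegree_map_of_leadingCoeff_ne_zero _ (by simpa using hr), natDegree_neg,
      natDegree_X_add_C, mul_one]
  have hpoly : f.map (evalRingHom c) * (f.map (evalRingHom b)).comp (-(X + C (b + c))) =
      C (f.evalEval (-(b + c)) c) * (f.map (evalRingHom (b + c))).comp (-(X + C (b + c))) := by
    refine Polynomial.funext fun a => ?_
    have := h b c hb hc hbc a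
    simp only [denom, pow_zero, mul_one] at this
    simp only [eval_mul, eval_comp, map_evalRingHom_eval, eval_C, eval_neg, eval_add, eval_X]
    rw [hsymm c a, hsymm (b + c), ← add_assoc, this, mul_comm]
  have h1 : (f.map (evalRingHom c)).natDegree = f.natDegree :=
    natDegree_map_of_leadingCoeff_ne_zero _ (by simpa using hℓc)
  by_contra hn
  have hne : ∀ p : ℝ[X], p.natDegree = f.natDegree → p ≠ 0 := fun p hp h0 =>
    hn (by rw [← hp, h0, natDegree_zero])
  have := congrArg natDegree hpoly
  rw [natDegree_mul (hne _ h1) (hne _ (hslice b hℓb)), natDegree_C_mul hK, h1, hslice b hℓb,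
    hslice _ hℓbc] at this
  omega

theorem CrossRel.natDegree_eq_zero {f : ℝ[X][Y]} (hsymm : ∀ x y, f.evalEval x y = f.evalEval y x)
    (h : CrossRel (fun x y => f.evalEval x y) 0 0) : f.natDegree = 0 := by
  rcases eq_or_ne f 0 with rfl | hf
  · exact natDegree_zero
  have hℓ := eventually_cofinite_eval_ne_zero (leadingCoeff_ne_zero.2 hf)
  obtain ⟨c, hc, hℓc, hfc⟩ := ((eventually_cofinite_ne 0).and
    (hℓ.and (eventually_cofinite_eventually_cofinite_evalEval_ne_zero hf))).exists
  have hshift : Tendsto (fun b : ℝ => b + c) cofinite cofinite :=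
    (add_left_injective c).tendsto_cofinite
  have hreflect : Tendsto (fun b : ℝ => -(b + c)) cofinite cofinite :=
    (neg_injective.comp (add_left_injective c)).tendsto_cofinite
  obtain ⟨b, hb, hbc, hℓb, hℓbc, hK⟩ := ((eventually_cofinite_ne 0).and
    ((eventually_cofinite_ne (-c)).and (hℓ.and ((hshift.eventually hℓ).and
      (hreflect.eventually hfc))))).exists
  exact h.natDegree_eq_zero_of_eval_ne_zero hsymm hb hc (by grind) hℓc hℓb hℓbc (by rwa [hsymm])

end SymmetricFraction

open SymmetricFraction

theorem stmt_4 (m k : ℕ) (P : MvPolynomial (Fin 2) ℝ)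
    (hY : 0 < m → ¬ (MvPolynomial.X 1 ∣ P))
    (hX : 0 < k → ¬ (MvPolynomial.X 0 ∣ P))
    (F : ℝ → ℝ → ℝ)
    (hF : ∀ x y : ℝ, x * y * (x + y) ≠ 0 →
      F x y = ev P (x + y) (x * y) / (x ^ m * y ^ m * (x + y) ^ k))
    (h : ∀ E1 E2 E3 E4 : ℝ, E1 + E2 + E3 + E4 = 0 →
      OkPair (-E1 - E2) E1 → OkPair E4 (-E3 - E4) → OkPair E1 E3 → OkPair E2 E4 →
      OkPair E4 (-E1 - E4) → OkPair (-E3 - E2) E3 →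
      (F (-E1 - E2) E1 * F E4 (-E3 - E4) = F E1 E3 * F E2 E4 ∧
        F E1 E3 * F E2 E4 = F E4 (-E1 - E4) * F (-E3 - E2) E3)) :
    ∃ c : ℝ, ∀ x y : ℝ, x * y * (x + y) ≠ 0 → F x y = c := by
  have hfF : ∀ x y, x * y * (x + y) ≠ 0 → F x y = (symmPoly P).evalEval x y / denom m k x y :=
    fun x y hxy => by rw [hF x y hxy, evalEval_symmPoly]; rfl
  have hrel : CrossRel (fun x y => (symmPoly P).evalEval x y) m k :=
    CrossRel.of_eventually (symmPoly P).continuous_uncurry_evalEval hfF fun b c hb hc hbc => by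
      filter_upwards [eventually_cofinite_ne 0, eventually_cofinite_ne (-b),
        eventually_cofinite_ne (-c), eventually_cofinite_ne (-(b + c))] with a h0 h1 h2 h3
      obtain ⟨-, hrel⟩ := h a b c (-(a + b + c)) (by ring) (by grind [OkPair])
        (by grind [OkPair]) (by grind [OkPair]) (by grind [OkPair]) (by grind [OkPair])
        (by grind [OkPair])
      rwa [show -a - -(a + b + c) = b + c by ring, show -c - b = -(b + c) by ring] at hrel
  obtain rfl : k = 0 := sum_exponent_eq_zero_of_not_X_zero_dvd hX hrel
  obtain rfl : m = 0 := prod_exponent_eq_zero_of_not_X_one_dvd hY hrel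
  refine ⟨(symmPoly P).evalEval 0 0, fun x y hxy => ?_⟩
  rw [hfF x y hxy, evalEval_eq_of_natDegree_eq_zero (evalEval_symmPoly_comm P)
    (hrel.natDegree_eq_zero (evalEval_symmPoly_comm P))]
  simp [denom]
end

section
/- Let P be a polynomial in two variables with real coefficients satisfying the reduced photon factorization constraint. Then for every natural number n, either P(x, ((3·2^{n+1} − 2)/(3·2^{n+1} − 1)²)·x²) = 0 for all x ∈ ℝ, or P(x, (3·2ⁿ·(3·2ⁿ − 1)/(3·2^{n+1} − 1)²)·x²) = 0 for all x ∈ ℝ. -/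
/-- The reduced photon factorization constraint for a two-variable polynomial `P`. -/
def PhotonConstraint (P : MvPolynomial (Fin 2) ℝ) : Prop :=
  ∀ E1 E2 E3 E4 : ℝ, E1 + E2 + E3 + E4 = 0 →
    (E1 - E3) * (E2 - E4) * ev P (E1 + E3) (E1 * E3) * ev P (E2 + E4) (E2 * E4)
    + (E1 + 2 * E2) * (2 * E3 + E4) * ev P (-E1) (-E2 * (E1 + E2)) *
        ev P (-E4) (-E3 * (E3 + E4))
    - (E1 + 2 * E4) * (E2 + 2 * E3) * ev P (-E1) (-E4 * (E1 + E4)) *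
        ev P (-E2) (-E3 * (E2 + E3)) = 0

/-- The one-variable polynomial `t ↦ P (u t, v t²)`. -/
noncomputable def polPar (P : MvPolynomial (Fin 2) ℝ) (u v : ℝ) : Polynomial ℝ :=
  MvPolynomial.aeval ![Polynomial.C u * Polynomial.X, Polynomial.C v * Polynomial.X ^ 2] P

lemma polPar_eval (P : MvPolynomial (Fin 2) ℝ) (u v t : ℝ) :
    (polPar P u v).eval t = ev P (u * t) (v * t ^ 2) := by
  induction P using MvPolynomial.induction_on with
  | C a => simp [polPar, ev]
  | add p q hp hq =>
      simp only [polPar, ev, map_add, Polynomial.eval_add] at *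
      rw [hp, hq]
  | mul_X p i hp =>
      simp only [polPar, ev, map_mul, Polynomial.eval_mul, MvPolynomial.aeval_X,
        MvPolynomial.eval_mul, MvPolynomial.eval_X] at *
      rw [hp]
      congr 1
      fin_cases i <;> simp

lemma vanish_of_polPar (P : MvPolynomial (Fin 2) ℝ) (u v c : ℝ) (hu : u ≠ 0)
    (hv : c * u ^ 2 = v) (h0 : polPar P u v = 0) :
    ∀ x : ℝ, ev P x (c * x ^ 2) = 0 := by
  intro x
  have h1 : (polPar P u v).eval (x / u) = 0 := by rw [h0]; simp
  rw [polPar_eval] at h1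
  rw [show u * (x / u) = x by field_simp] at h1
  rw [show v * (x / u) ^ 2 = c * x ^ 2 by rw [← hv]; field_simp] at h1
  exact h1

lemma dichotomy (P : MvPolynomial (Fin 2) ℝ) (u v w : ℝ) {c c' : ℝ} (hu : u ≠ 0)
    (hv : c * u ^ 2 = v) (hw : c' * u ^ 2 = w)
    (H : ∀ t : ℝ, t ≠ 0 → ev P (u * t) (v * t ^ 2) * ev P (-(u * t)) (w * t ^ 2) = 0) :
    (∀ x : ℝ, ev P x (c * x ^ 2) = 0) ∨ (∀ x : ℝ, ev P x (c' * x ^ 2) = 0) := by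
  have hpq : polPar P u v * polPar P (-u) w = 0 := by
    apply Polynomial.eq_zero_of_infinite_isRoot
    apply Set.Infinite.mono (s := ({(0 : ℝ)}ᶜ : Set ℝ))
    · intro t ht
      have ht' : t ≠ 0 := by simpa using ht
      simp only [Set.mem_setOf_eq, Polynomial.IsRoot, Polynomial.eval_mul, polPar_eval]
      rw [show (-u) * t = -(u * t) by ring]
      exact H t ht'
    · exact (Set.finite_singleton (0 : ℝ)).infinite_compl
  rcases mul_eq_zero.mp hpq with h0 | h0
  · exact Or.inl (vanish_of_polPar P u v c hu hv h0)
  · exact Or.inr (vanish_of_polPar P (-u) w c' (neg_ne_zero.mpr hu)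
      (by rw [show ((-u) : ℝ) ^ 2 = u ^ 2 by ring]; exact hw) h0)

theorem stmt_6 (P : MvPolynomial (Fin 2) ℝ) (h : PhotonConstraint P) :
    ∀ n : ℕ,
      (∀ x : ℝ, ev P x (((3 * 2 ^ (n + 1) - 2) / (3 * 2 ^ (n + 1) - 1) ^ 2) * x ^ 2) = 0) ∨
      (∀ x : ℝ,
        ev P x ((3 * 2 ^ n * (3 * 2 ^ n - 1) / (3 * 2 ^ (n + 1) - 1) ^ 2) * x ^ 2) = 0) := by
  intro n
  induction n with
  | zero =>
      apply dichotomy P 5 4 6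
      · norm_num
      · norm_num
      · norm_num
      · intro t ht
        have hc := h (4 * t) (-(2 * t)) t (-(3 * t)) (by ring)
        rw [show 4 * t + t = 5 * t by ring,
            show 4 * t * t = 4 * t ^ 2 by ring,
            show -(2 * t) + -(3 * t) = -(5 * t) by ring,
            show -(2 * t) * -(3 * t) = 6 * t ^ 2 by ring] at hc
        have h2 : 3 * t ^ 2 * (ev P (5 * t) (4 * t ^ 2) * ev P (-(5 * t)) (6 * t ^ 2)) = 0 := by
          linear_combination hc
        exact (mul_eq_zero.mp h2).resolve_left
          (mul_ne_zero (by norm_num) (pow_ne_zero 2 ht))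
  | succ n ih =>
      have e1 : (3 : ℝ) * 2 ^ (n + 1) = 2 * (3 * 2 ^ n) := by rw [pow_succ]; ring
      have e2 : (3 : ℝ) * 2 ^ (n + 1 + 1) = 4 * (3 * 2 ^ n) := by
        rw [pow_succ, pow_succ]; ring
      rw [e1] at ih
      rw [e2, e1]
      set m := (3 : ℝ) * 2 ^ n with hm
      have hp1 : (1 : ℝ) ≤ 2 ^ n := one_le_pow₀ (by norm_num)
      have hm3 : (3 : ℝ) ≤ m := by rw [hm]; linarith
      have h2m : (2 * m - 1) ≠ 0 := by
        have : (0 : ℝ) < 2 * m - 1 := by linarith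
        exact this.ne'
      have h4m : (4 * m - 1) ≠ 0 := by
        have : (0 : ℝ) < 4 * m - 1 := by linarith
        exact this.ne'
      have h4m3 : ∀ t : ℝ, t ≠ 0 → (4 * m - 3) * t ^ 2 ≠ 0 := fun t ht =>
        mul_ne_zero (ne_of_gt (by linarith)) (pow_ne_zero 2 ht)
      rcases ih with hA | hB
      · -- case A : P vanishes on the parabola (2m-2)/(2m-1)^2
        apply Or.symm
        apply dichotomy P (4 * m - 1) (2 * m * (2 * m - 1)) (4 * m - 2) h4m
          (div_mul_cancel₀ _ (pow_ne_zero 2 h4m))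
          (div_mul_cancel₀ _ (pow_ne_zero 2 h4m))
        intro t ht
        have hc := h (-((4 * m - 2) * t)) ((2 * m - 1) * t) (-t) (2 * m * t) (by ring)
        rw [show -((4 * m - 2) * t) + -t = -((4 * m - 1) * t) by ring,
            show -((4 * m - 2) * t) * -t = (4 * m - 2) * t ^ 2 by ring,
            show (2 * m - 1) * t + 2 * m * t = (4 * m - 1) * t by ring,
            show (2 * m - 1) * t * (2 * m * t) = 2 * m * (2 * m - 1) * t ^ 2 by ring,
            show -(-t) * ((2 * m - 1) * t + -t)
                = (2 * m - 2) / (2 * m - 1) ^ 2 * (-((2 * m - 1) * t)) ^ 2 by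
              rw [div_mul_eq_mul_div, eq_div_iff (pow_ne_zero 2 h2m)]; ring] at hc
        have h1 := hA (-((2 * m - 1) * t))
        rw [h1] at hc
        have h2 : (4 * m - 3) * t ^ 2 *
            (ev P ((4 * m - 1) * t) (2 * m * (2 * m - 1) * t ^ 2) *
              ev P (-((4 * m - 1) * t)) ((4 * m - 2) * t ^ 2)) = 0 := by
          linear_combination hc
        exact (mul_eq_zero.mp h2).resolve_left (h4m3 t ht)
      · -- case B : P vanishes on the parabola m(m-1)/(2m-1)^2
        apply dichotomy P (4 * m - 1) (4 * m - 2) (2 * m * (2 * m - 1)) h4m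
          (div_mul_cancel₀ _ (pow_ne_zero 2 h4m))
          (div_mul_cancel₀ _ (pow_ne_zero 2 h4m))
        intro t ht
        have hc := h ((4 * m - 2) * t) ((1 - 2 * m) * t) t (-(2 * m * t)) (by ring)
        rw [show (4 * m - 2) * t + t = (4 * m - 1) * t by ring,
            show (4 * m - 2) * t * t = (4 * m - 2) * t ^ 2 by ring,
            show (1 - 2 * m) * t + -(2 * m * t) = -((4 * m - 1) * t) by ring,
            show (1 - 2 * m) * t * -(2 * m * t) = 2 * m * (2 * m - 1) * t ^ 2 by ring,
            show -(-(2 * m * t)) * ((4 * m - 2) * t + -(2 * m * t))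
                = m * (m - 1) / (2 * m - 1) ^ 2 * (-((4 * m - 2) * t)) ^ 2 by
              rw [div_mul_eq_mul_div, eq_div_iff (pow_ne_zero 2 h2m)]; ring] at hc
        have h1 := hB (-((4 * m - 2) * t))
        rw [h1] at hc
        have h2 : (4 * m - 3) * t ^ 2 *
            (ev P ((4 * m - 1) * t) ((4 * m - 2) * t ^ 2) *
              ev P (-((4 * m - 1) * t)) (2 * m * (2 * m - 1) * t ^ 2)) = 0 := by
          linear_combination hc
        exact (mul_eq_zero.mp h2).resolve_left (h4m3 t ht)
end
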